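/- Let G ⊆ ℝ^d be compact and suppose a closed ball of radius ρ > 0 rolls freely in G. Then for every x ∈ G and every 0 < ε ≤ ρ, there exists y such that B_{ε/2}(y) ⊆ B_ε(x) ∩ G. -/
import Mathlib

open Metric
open scoped RealInnerProductSpace

private lemma aux_sq_le {a b : ℝ} (ha : 0 ≤ a) (h : a ≤ b) : a ^ 2 ≤ b ^ 2 := by
  nlinarith

private lemma aux_sq_lt {a b : ℝ} (ha : 0 ≤ a) (h : a < b) : a ^ 2 < b ^ 2 := by
  nlinarith

private lemma aux_le_of_sq {a b : ℝ} (ha : 0 ≤ a) (hb : 0 ≤ b) (h : a ^ 2 ≤ b ^ 2) :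
    a ≤ b := by
  nlinarith

/-- A ball of radius `ρ` rolls freely in `G`. -/
def RollsFreely {d : ℕ} (ρ : ℝ) (G : Set (EuclideanSpace ℝ (Fin d))) : Prop :=
  ∀ a ∈ frontier G, ∃ z, a ∈ Metric.closedBall z ρ ∧ Metric.closedBall z ρ ⊆ G

set_option maxHeartbeats 1600000 in
/-- If a ball of radius `ρ > 0` rolls freely in the compact set `G`, then for every
`x ∈ G` and `0 < ε ≤ ρ` there is `y` with `B_{ε/2}(y) ⊆ B_ε(x) ∩ G`. -/
theorem exists_interior_ball {d : ℕ} {G : Set (EuclideanSpace ℝ (Fin d))}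
    (hcomp : IsCompact G) {ρ : ℝ} (hρ : 0 < ρ) (hroll : RollsFreely ρ G)
    {x : EuclideanSpace ℝ (Fin d)} (hx : x ∈ G) {ε : ℝ} (hε : 0 < ε) (hερ : ε ≤ ρ) :
    ∃ y, Metric.ball y (ε / 2) ⊆ Metric.ball x ε ∩ G := by
  classical
  by_cases hGall : ∀ v, v ∈ G
  · exact ⟨x, fun w hw =>
      ⟨Metric.ball_subset_ball (by linarith only [hε]) hw, hGall w⟩⟩
  push_neg at hGall
  obtain ⟨v₀, hv₀⟩ := hGall
  have hGclosed : IsClosed G := hcomp.isClosed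
  -- the union `F` of all rolled balls inside `G`
  obtain ⟨F, hFdef, hFclosed⟩ :
      ∃ F : Set (EuclideanSpace ℝ (Fin d)),
        (∀ p, p ∈ F ↔ ∃ z, Metric.closedBall z ρ ⊆ G ∧ dist p z ≤ ρ) ∧ IsClosed F := by
    set S : Set (EuclideanSpace ℝ (Fin d)) := {z | Metric.closedBall z ρ ⊆ G} with hSdef
    have hSclosed : IsClosed S := by
      rw [← isOpen_compl_iff, Metric.isOpen_iff]
      intro z hz
      have hz' : ¬ Metric.closedBall z ρ ⊆ G := hz
      obtain ⟨p, hp1, hp2⟩ := Set.not_subset.mp hz'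
      obtain ⟨η, hη, hball⟩ := Metric.isOpen_iff.mp hGclosed.isOpen_compl p hp2
      refine ⟨η, hη, fun z' hz' => ?_⟩
      show ¬ Metric.closedBall z' ρ ⊆ G
      apply Set.not_subset.mpr
      refine ⟨p + (z' - z), ?_, ?_⟩
      · have h1 : p + (z' - z) - z' = p - z := by abel
        simp only [Metric.mem_closedBall, dist_eq_norm, h1]
        simpa [dist_eq_norm] using hp1
      · have hmem : p + (z' - z) ∈ Metric.ball p η := by
          have h1 : p + (z' - z) - p = z' - z := by abel
          simp only [Metric.mem_ball, dist_eq_norm, h1]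
          simpa [dist_eq_norm] using hz'
        exact hball hmem
    have hSbdd : Bornology.IsBounded S :=
      hcomp.isBounded.subset (fun z hz => hz (Metric.mem_closedBall_self hρ.le))
    have hScompact : IsCompact S :=
      Metric.isCompact_of_isClosed_isBounded hSclosed hSbdd
    refine ⟨(fun p : (EuclideanSpace ℝ (Fin d)) × (EuclideanSpace ℝ (Fin d)) =>
        p.1 + p.2) '' (S ×ˢ Metric.closedBall (0 : EuclideanSpace ℝ (Fin d)) ρ),
        ?_, ?_⟩
    · intro p
      constructor
      · rintro ⟨⟨z, b⟩, ⟨hzS, hb⟩, rfl⟩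
        refine ⟨z, hzS, ?_⟩
        have h1 : z + b - z = b := by abel
        show dist (z + b) z ≤ ρ
        rw [dist_eq_norm, h1]
        simpa [dist_eq_norm] using hb
      · rintro ⟨z, hzG, hpz⟩
        refine ⟨⟨z, p - z⟩, ⟨hzG, ?_⟩, ?_⟩
        · simpa [Metric.mem_closedBall, dist_eq_norm] using hpz
        · show z + (p - z) = p
          abel
    · exact ((hScompact.prod (isCompact_closedBall _ _)).image continuous_add).isClosed
  by_cases hxF : x ∈ F
  · -- Case A : x is inside some rolled ball
    obtain ⟨z, hzG, hxz⟩ := (hFdef x).1 hxF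
    by_cases hL : dist x z ≤ ρ - ε / 2
    · refine ⟨x, fun w hw =>
        ⟨Metric.ball_subset_ball (by linarith only [hε]) hw, ?_⟩⟩
      apply hzG
      have hwx : dist w x < ε / 2 := Metric.mem_ball.mp hw
      have h1 : dist w z ≤ dist w x + dist x z := dist_triangle w x z
      exact Metric.mem_closedBall.mpr (by linarith only [hwx, h1, hL])
    · push_neg at hL
      have hε2 : (0:ℝ) < ε / 2 := by linarith only [hε]
      have hLpos : 0 < dist x z := lt_of_lt_of_le (by linarith only [hε, hερ]) hL.le
      set L := dist x z with hLdef
      clear_value L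
      have hLne : L ≠ 0 := ne_of_gt hLpos
      have hρε : (0:ℝ) ≤ ρ - ε / 2 := by linarith only [hε, hερ]
      set θ : ℝ := 1 - (ρ - ε / 2) / L with hθdef
      clear_value θ
      have hdiv : (ρ - ε / 2) / L * L = ρ - ε / 2 := div_mul_cancel₀ _ hLne
      have hθ0 : 0 ≤ θ := by
        have h1 : (ρ - ε / 2) / L ≤ 1 := (div_le_one hLpos).mpr hL.le
        rw [hθdef]; linarith only [h1]
      have hθle1 : θ ≤ 1 := by
        have h1 : 0 ≤ (ρ - ε / 2) / L := div_nonneg hρε hLpos.le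
        rw [hθdef]; linarith only [h1]
      set y := x + θ • (z - x) with hydef
      clear_value y
      have hzx : ‖z - x‖ = L := by rw [← dist_eq_norm, dist_comm]; exact hLdef.symm
      have hyxv : y - x = θ • (z - x) := by rw [hydef]; abel
      have hyx : dist y x = L - (ρ - ε / 2) := by
        rw [dist_eq_norm, hyxv, norm_smul, Real.norm_eq_abs, abs_of_nonneg hθ0, hzx,
          hθdef, sub_mul, one_mul, hdiv]
      have hyzv : y - z = (θ - 1) • (z - x) := by
        rw [hydef, sub_smul, one_smul]; abel
      have hθ1neg : θ - 1 ≤ 0 := by linarith only [hθle1]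
      have hyz : dist y z = ρ - ε / 2 := by
        rw [dist_eq_norm, hyzv, norm_smul, Real.norm_eq_abs, abs_of_nonpos hθ1neg, hzx]
        have h2 : -(θ - 1) = (ρ - ε / 2) / L := by rw [hθdef]; ring
        rw [h2, hdiv]
      have hyxle : dist y x ≤ ε / 2 := by
        rw [hyx]
        linarith only [hxz]
      refine ⟨y, fun w hw => ⟨?_, ?_⟩⟩
      · have hwy : dist w y < ε / 2 := Metric.mem_ball.mp hw
        have h1 : dist w x ≤ dist w y + dist y x := dist_triangle w y x
        exact Metric.mem_ball.mpr (by linarith only [hwy, h1, hyxle])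
      · apply hzG
        have hwy : dist w y < ε / 2 := Metric.mem_ball.mp hw
        have h1 : dist w z ≤ dist w y + dist y z := dist_triangle w y z
        rw [hyz] at h1
        exact Metric.mem_closedBall.mpr (by linarith only [hwy, h1])
  · -- Case B : x is in a "pore"
    have hUopen : IsOpen (G \ F) := by
      have h1 : G \ F = interior G \ F := by
        ext w
        constructor
        · rintro ⟨hwG, hwF⟩
          refine ⟨?_, hwF⟩
          by_contra hwi
          have hwfr : w ∈ frontier G := ⟨subset_closure hwG, hwi⟩
          obtain ⟨z, hz1, hz2⟩ := hroll w hwfr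
          exact hwF ((hFdef w).2 ⟨z, hz2, Metric.mem_closedBall.mp hz1⟩)
        · rintro ⟨hwG, hwF⟩
          exact ⟨interior_subset hwG, hwF⟩
      rw [h1]
      exact isOpen_interior.sdiff hFclosed
    have hxU : x ∈ G \ F := ⟨hx, hxF⟩
    set P := connectedComponentIn (G \ F) x with hPdef
    have hPopen : IsOpen P := hUopen.connectedComponentIn
    have hxP : x ∈ P := mem_connectedComponentIn hxU
    have hPU : P ⊆ G \ F := connectedComponentIn_subset _ x
    have hPG : P ⊆ G := fun p hp => (hPU hp).1
    have hPF : ∀ p ∈ P, p ∉ F := fun p hp => (hPU hp).2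
    have hclosPG : closure P ⊆ G := closure_minimal hPG hGclosed
    have hPcne : (Pᶜ : Set (EuclideanSpace ℝ (Fin d))).Nonempty :=
      ⟨v₀, fun h => hv₀ (hPG h)⟩
    have hPcclosed : IsClosed (Pᶜ : Set (EuclideanSpace ℝ (Fin d))) :=
      hPopen.isClosed_compl
    clear_value P
    set δ := Metric.infDist x Pᶜ with hδdef
    have hδpos : 0 < δ :=
      (hPcclosed.notMem_iff_infDist_pos hPcne).1 (by simpa using hxP)
    have hδne : δ ≠ 0 := ne_of_gt hδpos
    have hballP : ∀ w, dist x w < δ → w ∈ P := by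
      intro w hw
      have h1 := Metric.notMem_of_dist_lt_infDist (s := Pᶜ) (x := x) (y := w) hw
      simpa using h1
    obtain ⟨w₀, hw₀Pc, hw₀d⟩ := hPcclosed.exists_infDist_eq_dist hPcne x
    have hw₀x : dist x w₀ = δ := hw₀d.symm
    clear_value δ
    -- key lemma at boundary points of the pore
    have key : ∀ w, w ∈ closure P → w ∉ P →
        ∃ z, Metric.closedBall z ρ ⊆ G ∧ dist w z = ρ ∧ δ + ρ ≤ dist x z := by
      intro w hwc hwP
      have hwG : w ∈ G := hclosPG hwc
      have hwF : w ∈ F := by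
        by_contra hwF
        have hwU : w ∈ G \ F := ⟨hwG, hwF⟩
        have hQopen : IsOpen (connectedComponentIn (G \ F) w) :=
          hUopen.connectedComponentIn
        have hwQ : w ∈ connectedComponentIn (G \ F) w := mem_connectedComponentIn hwU
        obtain ⟨η, hη, hball⟩ := Metric.isOpen_iff.1 hQopen w hwQ
        obtain ⟨p, hpP, hpd⟩ := Metric.mem_closure_iff.1 hwc η hη
        have hpQ : p ∈ connectedComponentIn (G \ F) w := by
          apply hball
          simpa [Metric.mem_ball, dist_comm] using hpd
        have e1 := connectedComponentIn_eq hpQ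
        have e2 := connectedComponentIn_eq (hPdef ▸ hpP)
        exact hwP (by rw [hPdef, e2, ← e1]; exact hwQ)
      obtain ⟨z, hzG, hwz⟩ := (hFdef w).1 hwF
      have hballzF : ∀ p, dist p z < ρ → p ∈ F := by
        intro p hp
        exact (hFdef p).2 ⟨z, hzG, hp.le⟩
      have hwzρ : dist w z = ρ := by
        rcases lt_or_eq_of_le hwz with hlt | heq
        · exfalso
          obtain ⟨p, hpP, hpd⟩ :=
            Metric.mem_closure_iff.1 hwc (ρ - dist w z) (by linarith only [hlt])
          have h2 : dist p z < ρ := by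
            have h3 := dist_triangle p w z
            have hpd' : dist p w < ρ - dist w z := by rwa [dist_comm] at hpd
            linarith only [h3, hpd']
          exact hPF p hpP (hballzF p h2)
        · exact heq
      refine ⟨z, hzG, hwzρ, ?_⟩
      by_contra hcon
      push_neg at hcon
      rcases lt_or_ge (dist x z) ρ with hc | hc
      · exact hPF x hxP (hballzF x hc)
      rcases lt_or_ge (dist x z) δ with hc2 | hc2
      · have hzP : z ∈ P := hballP z hc2
        exact hPF z hzP (hballzF z (by simpa using hρ))
      · set L := dist x z with hLdef
        clear_value L
        have hL0 : 0 < L := lt_of_lt_of_le hρ hc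
        have hLne : L ≠ 0 := ne_of_gt hL0
        set t : ℝ := (L + δ - ρ) / 2 with htdef
        clear_value t
        have ht0 : 0 < t := by rw [htdef]; linarith only [hc, hδpos]
        have htδ : t < δ := by rw [htdef]; linarith only [hcon]
        have htL : t ≤ L := by rw [htdef]; linarith only [hc2, hρ]
        set m := x + (t / L) • (z - x) with hmdef
        clear_value m
        have hzxL : ‖z - x‖ = L := by rw [← dist_eq_norm, dist_comm]; exact hLdef.symm
        have hmx : dist m x = t := by
          have h1 : m - x = (t / L) • (z - x) := by rw [hmdef]; abel
          rw [dist_eq_norm, h1, norm_smul, Real.norm_eq_abs,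
            abs_of_pos (div_pos ht0 hL0), hzxL, div_mul_cancel₀ _ hLne]
        have hmz : dist m z = L - t := by
          have h1 : m - z = (t / L - 1) • (z - x) := by
            rw [hmdef, sub_smul, one_smul]; abel
          have hneg : t / L - 1 ≤ 0 := by
            rw [sub_nonpos, div_le_one hL0]; exact htL
          rw [dist_eq_norm, h1, norm_smul, Real.norm_eq_abs, abs_of_nonpos hneg, hzxL]
          have h2 : -(t / L - 1) = 1 - t / L := by ring
          rw [h2, sub_mul, one_mul, div_mul_cancel₀ _ hLne]
        have hmP : m ∈ P := hballP m (by rw [dist_comm, hmx]; exact htδ)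
        have hmF : m ∈ F := hballzF m (by rw [hmz]; linarith only [htdef, hcon])
        exact hPF m hmP hmF
    -- the nearest point of the pore complement, and alignment
    have hw₀P : w₀ ∉ P := hw₀Pc
    set k := w₀ - x with hkdef
    clear_value k
    have hk : ‖k‖ = δ := by rw [hkdef, ← dist_eq_norm, dist_comm, hw₀x]
    have hw₀clos : w₀ ∈ closure P := by
      rw [Metric.mem_closure_iff]
      intro ε' hε'
      set β := min 1 (ε' / (δ + 1)) with hβdef
      clear_value β
      have hβpos : 0 < β := by
        rw [hβdef]
        exact lt_min one_pos (div_pos hε' (by linarith only [hδpos]))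
      have hβ1 : β ≤ 1 := by rw [hβdef]; exact min_le_left _ _
      have hβ2 : β * (δ + 1) ≤ ε' := by
        have h1 : β ≤ ε' / (δ + 1) := by rw [hβdef]; exact min_le_right _ _
        calc β * (δ + 1) ≤ ε' / (δ + 1) * (δ + 1) := by
              apply mul_le_mul_of_nonneg_right h1 (by linarith only [hδpos])
          _ = ε' := by field_simp
      refine ⟨x + (1 - β) • k, ?_, ?_⟩
      · apply hballP
        have h1 : x + (1 - β) • k - x = (1 - β) • k := by abel
        have hβ3 : (0:ℝ) ≤ 1 - β := by linarith only [hβ1]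
        rw [dist_comm, dist_eq_norm, h1, norm_smul, Real.norm_eq_abs,
          abs_of_nonneg hβ3, hk]
        nlinarith only [hβpos, hδpos, hβ1]
      · have h1 : w₀ - (x + (1 - β) • k) = β • k := by
          rw [hkdef, sub_smul, one_smul]; abel
        rw [dist_eq_norm, h1, norm_smul, Real.norm_eq_abs, abs_of_pos hβpos, hk]
        nlinarith only [hβ2, hβpos, hδpos]
    obtain ⟨ζ, hζG, hw₀ζ, hxζ⟩ := key w₀ hw₀clos hw₀P
    have hxζeq : dist x ζ = δ + ρ := by
      refine le_antisymm ?_ hxζ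
      calc dist x ζ ≤ dist x w₀ + dist w₀ ζ := dist_triangle x w₀ ζ
        _ = δ + ρ := by rw [hw₀x, hw₀ζ]
    have hBknorm : ‖ζ - w₀‖ = ρ := by rw [← dist_eq_norm, dist_comm, hw₀ζ]
    have hkB : ‖k + (ζ - w₀)‖ = δ + ρ := by
      have h1 : k + (ζ - w₀) = ζ - x := by rw [hkdef]; abel
      rw [h1, ← dist_eq_norm, dist_comm, hxζeq]
    have hinner : ⟪k, ζ - w₀⟫ = δ * ρ := by
      have h1 := norm_add_sq_real k (ζ - w₀)
      rw [hkB, hk, hBknorm] at h1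
      linear_combination (-1/2 : ℝ) * h1
    have hBk : ζ - w₀ = (ρ / δ) • k := by
      have h0 : ‖(ζ - w₀) - (ρ / δ) • k‖ ^ 2 = 0 := by
        rw [norm_sub_sq_real, real_inner_smul_right, real_inner_comm, hinner, norm_smul,
          Real.norm_eq_abs, abs_of_nonneg (by positivity : (0:ℝ) ≤ ρ / δ), hk, hBknorm]
        field_simp
        ring
      have h1 : (ζ - w₀) - (ρ / δ) • k = 0 :=
        norm_eq_zero.mp (pow_eq_zero_iff two_ne_zero |>.mp h0)
      exact sub_eq_zero.mp h1
    have hζeq : ζ = x + (1 + ρ / δ) • k := by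
      have h1 : ζ = w₀ + (ζ - w₀) := by abel
      have h2 : w₀ = x + k := by rw [hkdef]; abel
      rw [h1, hBk, h2, add_smul, one_smul]
      abel
    -- the candidate center y
    have hs : 0 < ε / 2 := by linarith only [hε]
    set y := x + ((ε / 2) / δ) • k with hydef
    clear_value y
    have hyx : dist y x = ε / 2 := by
      have h1 : y - x = ((ε / 2) / δ) • k := by rw [hydef]; abel
      rw [dist_eq_norm, h1, norm_smul, Real.norm_eq_abs,
        abs_of_pos (div_pos hs hδpos), hk, div_mul_cancel₀ _ hδne]
    have hmain : ∀ v, v ∉ G → ε / 2 ≤ dist v y := by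
      intro v hvG
      have hvx : v ≠ x := fun h => hvG (h ▸ hx)
      set D := v - x with hDdef
      have hD0 : D ≠ 0 := sub_ne_zero.mpr hvx
      clear_value D
      have hDpos : 0 < ‖D‖ := norm_pos_iff.mpr hD0
      -- KEY1 : ‖v - x‖² > δ² + 2δρ
      set A : Set ℝ := Set.Icc (0:ℝ) 1 ∩ (fun θ : ℝ => x + θ • D) ⁻¹' Pᶜ with hAdef
      have hAclosed : IsClosed A := by
        apply IsClosed.inter isClosed_Icc
        exact hPcclosed.preimage
          (continuous_const.add (continuous_id.smul continuous_const))
      have hAmem : ∀ θ : ℝ, θ ∈ A ↔ (0 ≤ θ ∧ θ ≤ 1) ∧ x + θ • D ∈ Pᶜ :=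
        fun θ => Iff.rfl
      clear_value A
      have hvPc : v ∈ Pᶜ := fun h => hvG (hPG h)
      have hv1 : x + (1:ℝ) • D = v := by rw [one_smul, hDdef]; abel
      have hAne : A.Nonempty :=
        ⟨1, (hAmem 1).2 ⟨⟨zero_le_one, le_rfl⟩, hv1 ▸ hvPc⟩⟩
      have hAbdd : BddBelow A := ⟨0, fun θ hθ => ((hAmem θ).1 hθ).1.1⟩
      set θ₁ := sInf A with hθ₁def
      clear_value θ₁
      have hθ₁A : θ₁ ∈ A := by rw [hθ₁def]; exact hAclosed.csInf_mem hAne hAbdd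
      have hθ₁mem := (hAmem θ₁).1 hθ₁A
      have hθ₁lb : δ / ‖D‖ ≤ θ₁ := by
        rw [hθ₁def]
        apply le_csInf hAne
        intro θ hθ
        obtain ⟨⟨hθ0, hθ1⟩, hθPc⟩ := (hAmem θ).1 hθ
        have h1 : δ ≤ dist x (x + θ • D) := by
          rw [hδdef]; exact Metric.infDist_le_dist_of_mem hθPc
        have h2 : dist x (x + θ • D) = θ * ‖D‖ := by
          have h3 : x - (x + θ • D) = -(θ • D) := by abel
          rw [dist_eq_norm, h3, norm_neg, norm_smul, Real.norm_eq_abs,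
            abs_of_nonneg hθ0]
        rw [h2] at h1
        rw [div_le_iff₀ hDpos]
        exact h1
      have hθ₁pos : 0 < θ₁ := lt_of_lt_of_le (div_pos hδpos hDpos) hθ₁lb
      have hθ₁le1 : θ₁ ≤ 1 := hθ₁mem.1.2
      set w₁ := x + θ₁ • D with hw₁def
      clear_value w₁
      have hw₁Pc : w₁ ∈ Pᶜ := hθ₁mem.2
      have hw₁P : w₁ ∉ P := hw₁Pc
      have hw₁clos : w₁ ∈ closure P := by
        rw [Metric.mem_closure_iff]
        intro ε' hε'
        set γ := min θ₁ (ε' / (‖D‖ + 1)) with hγdef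
        clear_value γ
        have hγpos : 0 < γ := by
          rw [hγdef]; exact lt_min hθ₁pos (div_pos hε' (by positivity))
        have hγθ : γ ≤ θ₁ := by rw [hγdef]; exact min_le_left _ _
        have hγD : γ * (‖D‖ + 1) ≤ ε' := by
          have h1 : γ ≤ ε' / (‖D‖ + 1) := by rw [hγdef]; exact min_le_right _ _
          calc γ * (‖D‖ + 1) ≤ ε' / (‖D‖ + 1) * (‖D‖ + 1) := by
                apply mul_le_mul_of_nonneg_right h1 (by positivity)
            _ = ε' := by field_simp
        have hθlt : θ₁ - γ / 2 < θ₁ := by linarith only [hγpos]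
        have hθ0 : 0 ≤ θ₁ - γ / 2 := by linarith only [hγθ, hγpos]
        have hθ1' : θ₁ - γ / 2 ≤ 1 := by linarith only [hθ₁le1, hγpos]
        have hθA : θ₁ - γ / 2 ∉ A :=
          notMem_of_lt_csInf (by rw [← hθ₁def]; exact hθlt) hAbdd
        have hθP : x + (θ₁ - γ / 2) • D ∈ P := by
          by_contra h
          exact hθA ((hAmem _).2 ⟨⟨hθ0, hθ1'⟩, h⟩)
        refine ⟨x + (θ₁ - γ / 2) • D, hθP, ?_⟩
        have h1 : w₁ - (x + (θ₁ - γ / 2) • D) = (γ / 2) • D := by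
          rw [hw₁def, sub_smul]; abel
        have hγ2 : (0:ℝ) < γ / 2 := by linarith only [hγpos]
        rw [dist_eq_norm, h1, norm_smul, Real.norm_eq_abs, abs_of_pos hγ2]
        have hprod : 0 ≤ γ * ‖D‖ := mul_nonneg hγpos.le (norm_nonneg D)
        linarith only [hγD, hγpos, hprod]
      have hθ₁lt1 : θ₁ < 1 := by
        rcases lt_or_eq_of_le hθ₁le1 with h | h
        · exact h
        · exfalso
          have h2 : w₁ = v := by rw [hw₁def, h, one_smul, hDdef]; abel
          exact hvG (h2 ▸ hclosPG hw₁clos)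
      obtain ⟨z₁, hz₁G, hw₁z₁, hxz₁⟩ := key w₁ hw₁clos hw₁P
      have hvz₁ : ρ < dist v z₁ := by
        by_contra h
        push_neg at h
        exact hvG (hz₁G (Metric.mem_closedBall.mpr h))
      have hk₁ : ‖z₁ - w₁‖ = ρ := by rw [← dist_eq_norm, dist_comm, hw₁z₁]
      have hN2 : 0 < ‖D‖ ^ 2 := pow_pos hDpos 2
      have ha : δ + ρ ≤ ‖θ₁ • D + (z₁ - w₁)‖ := by
        have h1 : x - z₁ = -(θ₁ • D + (z₁ - w₁)) := by rw [hw₁def]; abel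
        calc δ + ρ ≤ dist x z₁ := hxz₁
          _ = ‖θ₁ • D + (z₁ - w₁)‖ := by rw [dist_eq_norm, h1, norm_neg]
      have ha2 : (δ + ρ) ^ 2 ≤ ‖θ₁ • D + (z₁ - w₁)‖ ^ 2 :=
        aux_sq_le (by linarith only [hδpos, hρ]) ha
      have e1 : ‖θ₁ • D + (z₁ - w₁)‖ ^ 2
          = θ₁ ^ 2 * ‖D‖ ^ 2 + 2 * (θ₁ * ⟪D, z₁ - w₁⟫) + ρ ^ 2 := by
        rw [norm_add_sq_real, real_inner_smul_left, norm_smul, Real.norm_eq_abs,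
          abs_of_pos hθ₁pos, hk₁]
        ring
      have hb : ρ < ‖(1 - θ₁) • D - (z₁ - w₁)‖ := by
        have h1 : v - z₁ = (1 - θ₁) • D - (z₁ - w₁) := by
          rw [hw₁def, sub_smul, one_smul, hDdef]; abel
        calc ρ < dist v z₁ := hvz₁
          _ = ‖(1 - θ₁) • D - (z₁ - w₁)‖ := by rw [dist_eq_norm, h1]
      have hb2 : ρ ^ 2 < ‖(1 - θ₁) • D - (z₁ - w₁)‖ ^ 2 := aux_sq_lt hρ.le hb
      have e2 : ‖(1 - θ₁) • D - (z₁ - w₁)‖ ^ 2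
          = (1 - θ₁) ^ 2 * ‖D‖ ^ 2 - 2 * ((1 - θ₁) * ⟪D, z₁ - w₁⟫) + ρ ^ 2 := by
        have h1θ0 : (0:ℝ) ≤ 1 - θ₁ := by linarith only [hθ₁le1]
        rw [norm_sub_sq_real, real_inner_smul_left, norm_smul, Real.norm_eq_abs,
          abs_of_nonneg h1θ0, hk₁]
        ring
      have h1θ : 0 < 1 - θ₁ := by linarith only [hθ₁lt1]
      rw [e2] at hb2
      rw [e1] at ha2
      have hfac : 0 < (1 - θ₁) * ((1 - θ₁) * ‖D‖ ^ 2 - 2 * ⟪D, z₁ - w₁⟫) := by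
        nlinarith only [hb2]
      have h2' : 2 * ⟪D, z₁ - w₁⟫ < (1 - θ₁) * ‖D‖ ^ 2 := by
        rcases mul_pos_iff.mp hfac with ⟨_, h⟩ | ⟨h, _⟩
        · linarith only [h]
        · linarith only [h, h1θ]
      have ha3 : δ ^ 2 + 2 * δ * ρ ≤ θ₁ ^ 2 * ‖D‖ ^ 2 + 2 * (θ₁ * ⟪D, z₁ - w₁⟫) := by
        nlinarith only [ha2]
      have key1 : δ ^ 2 + 2 * δ * ρ < ‖D‖ ^ 2 := by
        have t1 : θ₁ * (2 * ⟪D, z₁ - w₁⟫) < θ₁ * ((1 - θ₁) * ‖D‖ ^ 2) :=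
          mul_lt_mul_of_pos_left h2' hθ₁pos
        have t2 : 0 < (1 - θ₁) * ‖D‖ ^ 2 := mul_pos h1θ hN2
        nlinarith only [ha3, t1, t2]
      -- KEY2 : v is outside the aligned exterior ball
      have hvζ : ρ < dist v ζ := by
        by_contra h
        push_neg at h
        exact hvG (hζG (Metric.mem_closedBall.mpr h))
      have hcpos : 0 < 1 + ρ / δ := by
        have h1 := div_pos hρ hδpos
        linarith only [h1]
      have hcδ : (1 + ρ / δ) * δ = δ + ρ := by field_simp
      have e3 : ‖D - (1 + ρ / δ) • k‖ ^ 2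
          = ‖D‖ ^ 2 - 2 * ((1 + ρ / δ) * ⟪D, k⟫) + ((1 + ρ / δ) * δ) ^ 2 := by
        rw [norm_sub_sq_real, real_inner_smul_right, norm_smul, Real.norm_eq_abs,
          abs_of_pos hcpos, hk]
      rw [hcδ] at e3
      have hvζ2 : ρ ^ 2 < ‖D - (1 + ρ / δ) • k‖ ^ 2 := by
        have h1 : v - ζ = D - (1 + ρ / δ) • k := by rw [hζeq, hDdef]; abel
        have h2 : ρ < ‖D - (1 + ρ / δ) • k‖ := by
          calc ρ < dist v ζ := hvζ
            _ = ‖D - (1 + ρ / δ) • k‖ := by rw [dist_eq_norm, h1]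
        exact aux_sq_lt hρ.le h2
      rw [e3] at hvζ2
      have h5 : 2 * ((1 + ρ / δ) * ⟪D, k⟫) < ‖D‖ ^ 2 + (δ ^ 2 + 2 * δ * ρ) := by
        nlinarith only [hvζ2]
      -- final algebra
      have e4 : ‖D - ((ε / 2) / δ) • k‖ ^ 2
          = ‖D‖ ^ 2 - 2 * (((ε / 2) / δ) * ⟪D, k⟫) + (ε / 2) ^ 2 := by
        rw [norm_sub_sq_real, real_inner_smul_right, norm_smul, Real.norm_eq_abs,
          abs_of_pos (div_pos hs hδpos), hk]
        have h1 : (ε / 2) / δ * δ = ε / 2 := div_mul_cancel₀ _ hδne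
        rw [h1]
      have h6 : (ε / 2) * (2 * ((1 + ρ / δ) * ⟪D, k⟫))
          < (ε / 2) * (‖D‖ ^ 2 + (δ ^ 2 + 2 * δ * ρ)) :=
        mul_lt_mul_of_pos_left h5 hs
      have h7 : (ε / 2) * (‖D‖ ^ 2 + (δ ^ 2 + 2 * δ * ρ)) < (δ + ρ) * ‖D‖ ^ 2 := by
        have t2 : (ε / 2) * (δ ^ 2 + 2 * δ * ρ) < (ε / 2) * ‖D‖ ^ 2 :=
          mul_lt_mul_of_pos_left key1 hs
        have t3 : ε * ‖D‖ ^ 2 ≤ ρ * ‖D‖ ^ 2 :=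
          mul_le_mul_of_nonneg_right hερ hN2.le
        have t4 : 0 < δ * ‖D‖ ^ 2 := mul_pos hδpos hN2
        linarith only [t2, t3, t4]
      have h8 : 2 * (((ε / 2) / δ) * ⟪D, k⟫) * (δ + ρ) < (δ + ρ) * ‖D‖ ^ 2 := by
        have heq : 2 * (((ε / 2) / δ) * ⟪D, k⟫) * (δ + ρ)
            = (ε / 2) * (2 * ((1 + ρ / δ) * ⟪D, k⟫)) := by
          field_simp
        rw [heq]
        linarith only [h6, h7]
      have h9 : 2 * (((ε / 2) / δ) * ⟪D, k⟫) < ‖D‖ ^ 2 := by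
        have hδρ : (0:ℝ) < δ + ρ := by linarith only [hδpos, hρ]
        have h8' : 2 * (((ε / 2) / δ) * ⟪D, k⟫) * (δ + ρ) < ‖D‖ ^ 2 * (δ + ρ) := by
          linarith only [h8]
        exact lt_of_mul_lt_mul_right h8' hδρ.le
      have hfinal2 : (ε / 2) ^ 2 ≤ ‖D - ((ε / 2) / δ) • k‖ ^ 2 := by
        rw [e4]; linarith only [h9]
      have hvy : v - y = D - ((ε / 2) / δ) • k := by rw [hydef, hDdef]; abel
      rw [dist_eq_norm, hvy]
      exact aux_le_of_sq hs.le (norm_nonneg _) hfinal2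
    refine ⟨y, fun w hw => ⟨?_, ?_⟩⟩
    · have hwy : dist w y < ε / 2 := Metric.mem_ball.mp hw
      have h1 : dist w x ≤ dist w y + dist y x := dist_triangle w y x
      rw [hyx] at h1
      refine Metric.mem_ball.mpr ?_
      linarith only [hwy, h1]
    · by_contra hwG
      have h1 := hmain w hwG
      have hwy : dist w y < ε / 2 := Metric.mem_ball.mp hw
      linarith only [h1, hwy]
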